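/- arXiv:1908.04467 — 5 statements merged into one kernel-verified Lean document; each statement's English description precedes it below -/
import Mathlib

section
/- For matrices B^c and B^d in R^{n×n} with zero diagonals, and any scalars α>0, β>0, the signed Laplacians satisfy α·L_{B^c} + β·L_{B^d} = L_{αB^c + βB^d} if and only if B^c and B^d are sign-consistent (i.e., b^c_{ij}·b^d_{ij} ≥ 0 for all i,j). -/
open Matrix BigOperators

/-- Signed Laplacian of a real matrix: diagonal entries are row sums of
absolute values of off-diagonal entries, off-diagonal entries are `-B i j`. -/
noncomputable def signedLaplacian {n : ℕ} (B : Matrix (Fin n) (Fin n) ℝ) :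
    Matrix (Fin n) (Fin n) ℝ :=
  Matrix.of fun i j => if i = j then ∑ k ∈ Finset.univ.erase i, |B i k| else -B i j

/-!
Off the diagonal both sides are `-(α Bᶜ + β Bᵈ)`, so only the diagonals matter. There the
triangle inequality gives `|α b + β b'| ≤ α |b| + β |b'|` term by term, so the row sums agree
iff every term is an equality, and for `α, β > 0` that happens iff `b` and `b'` do not have
opposite signs.
-/

theorem abs_mul_add_mul_eq_iff_mul_nonneg {α β : ℝ} (hα : 0 < α) (hβ : 0 < β) (a b : ℝ) :
    |α * a + β * b| = α * |a| + β * |b| ↔ 0 ≤ a * b := by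
  have hscale : 0 ≤ (α * a) * (β * b) ↔ 0 ≤ a * b := by
    rw [show (α * a) * (β * b) = (α * β) * (a * b) by ring]
    exact mul_nonneg_iff_of_pos_left (mul_pos hα hβ)
  rw [← hscale, mul_nonneg_iff, ← abs_add_eq_add_abs_iff, abs_mul, abs_mul, abs_of_pos hα,
    abs_of_pos hβ]

theorem abs_mul_add_mul_le {α β : ℝ} (hα : 0 ≤ α) (hβ : 0 ≤ β) (a b : ℝ) :
    |α * a + β * b| ≤ α * |a| + β * |b| :=
  calc |α * a + β * b| ≤ |α * a| + |β * b| := abs_add_le _ _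
    _ = α * |a| + β * |b| := by rw [abs_mul, abs_mul, abs_of_nonneg hα, abs_of_nonneg hβ]

namespace signedLaplacian

variable {n : ℕ}

theorem apply_self (B : Matrix (Fin n) (Fin n) ℝ) (i : Fin n) :
    signedLaplacian B i i = ∑ k ∈ Finset.univ.erase i, |B i k| := by
  simp [signedLaplacian]

theorem apply_of_ne (B : Matrix (Fin n) (Fin n) ℝ) {i j : Fin n} (hij : i ≠ j) :
    signedLaplacian B i j = -B i j := by
  simp [signedLaplacian, hij]

theorem smul_add_smul_eq_iff (Bc Bd : Matrix (Fin n) (Fin n) ℝ) {α β : ℝ} (hα : 0 ≤ α)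
    (hβ : 0 ≤ β) :
    α • signedLaplacian Bc + β • signedLaplacian Bd = signedLaplacian (α • Bc + β • Bd) ↔
      ∀ i k, k ≠ i → |α * Bc i k + β * Bd i k| = α * |Bc i k| + β * |Bd i k| := by
  have hoff : ∀ i j, i ≠ j → (α • signedLaplacian Bc + β • signedLaplacian Bd) i j =
      signedLaplacian (α • Bc + β • Bd) i j := by
    intro i j hij
    simp only [Matrix.add_apply, Matrix.smul_apply, apply_of_ne _ hij, smul_eq_mul]
    ring
  have hdiag_left : ∀ i, (α • signedLaplacian Bc + β • signedLaplacian Bd) i i =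
      ∑ k ∈ Finset.univ.erase i, (α * |Bc i k| + β * |Bd i k|) := by
    intro i
    simp only [Matrix.add_apply, Matrix.smul_apply, apply_self, smul_eq_mul, Finset.mul_sum,
      Finset.sum_add_distrib]
  have hdiag_right : ∀ i, signedLaplacian (α • Bc + β • Bd) i i =
      ∑ k ∈ Finset.univ.erase i, |α * Bc i k + β * Bd i k| := by
    intro i
    simp only [apply_self, Matrix.add_apply, Matrix.smul_apply, smul_eq_mul]
  have hle : ∀ i, ∀ k ∈ Finset.univ.erase i,
      |α * Bc i k + β * Bd i k| ≤ α * |Bc i k| + β * |Bd i k| :=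
    fun i k _ => abs_mul_add_mul_le hα hβ _ _
  constructor
  · intro h i k hki
    have hi := congrFun (congrFun h i) i
    rw [hdiag_left, hdiag_right] at hi
    exact (Finset.sum_eq_sum_iff_of_le (hle i)).mp hi.symm k (by simpa using hki)
  · intro h
    ext i j
    rcases eq_or_ne i j with rfl | hij
    · rw [hdiag_left, hdiag_right]
      exact Finset.sum_congr rfl fun k hk => (h i k (Finset.ne_of_mem_erase hk)).symm
    · exact hoff i j hij

end signedLaplacian

theorem stmt_0_general {n : ℕ} (Bc Bd : Matrix (Fin n) (Fin n) ℝ)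
    (hBc : ∀ i, Bc i i = 0)
    (α β : ℝ) (hα : 0 < α) (hβ : 0 < β) :
    α • signedLaplacian Bc + β • signedLaplacian Bd =
      signedLaplacian (α • Bc + β • Bd) ↔ ∀ i j, 0 ≤ Bc i j * Bd i j := by
  rw [signedLaplacian.smul_add_smul_eq_iff Bc Bd hα.le hβ.le]
  simp only [abs_mul_add_mul_eq_iff_mul_nonneg hα hβ]
  refine ⟨fun h i j => ?_, fun h i k _ => h i k⟩
  rcases eq_or_ne j i with rfl | hji
  · simp [hBc]
  · exact h i j hji

theorem stmt_0 {n : ℕ} (Bc Bd : Matrix (Fin n) (Fin n) ℝ)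
    (hBc : ∀ i, Bc i i = 0) (hBd : ∀ i, Bd i i = 0)
    (α β : ℝ) (hα : 0 < α) (hβ : 0 < β) :
    α • signedLaplacian Bc + β • signedLaplacian Bd =
      signedLaplacian (α • Bc + β • Bd) ↔ ∀ i j, 0 ≤ Bc i j * Bd i j :=
  stmt_0_general Bc Bd hBc α β hα hβ
end

section
/- If a directed graph on vertices {0,1,...,n} contains a spanning tree rooted at vertex 0 (a directed path from 0 to every other vertex), then its Laplacian matrix L has exactly one zero eigenvalue and all its other eigenvalues have positive real part. -/
open Matrix BigOperators

/-!
Row `i` of `L x` is `∑ₖ aᵢₖ (xᵢ - xₖ)`, so at a maximum of a real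
vector `x` it is `≥ 0`, and if it vanishes there then every in-neighbour of `i` also carries the
maximal value. If `L x = 0`, following a path from the root to a maximum backwards shows that the
root carries the maximum; likewise the minimum, so `ker L` consists of the constant vectors. If
`L (L x) = 0` then `L x` is a constant `c`, and evaluating at a maximum and a minimum of `x` gives
`c ≥ 0 ≥ c`. Hence `ker L² = ker L` is one-dimensional, which is the algebraic multiplicity of the
eigenvalue `0`; real and imaginary parts carry all of this over to complex vectors. The remaining
eigenvalues lie in Gershgorin discs centred at `dᵢ ≥ 0` with radius `dᵢ`, which meet the closed
left half-plane only in `0`.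
-/

open Finset

namespace Module.End

variable {R M : Type*} [CommRing R] [AddCommGroup M] [Module R M]

theorem maxGenEigenspace_zero_eq_ker {f : End R M} (hf : ∀ x, f (f x) = 0 → f x = 0) :
    f.maxGenEigenspace 0 = LinearMap.ker f := by
  have hpow : ∀ (k : ℕ) (x : M), (f ^ k) x = 0 → f x = 0 := by
    intro k
    induction k with
    | zero => intro x hx; simp_all
    | succ k ih =>
      exact fun x hx => hf x (ih (f x) (by rwa [← Module.End.mul_apply, ← pow_succ]))
  ext x
  simp only [mem_maxGenEigenspace, zero_smul, sub_zero, LinearMap.mem_ker]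
  exact ⟨fun ⟨k, hk⟩ => hpow k x hk, fun hx => ⟨1, by rwa [pow_one]⟩⟩

end Module.End

theorem Complex.re_pos_of_mem_closedBall {d : ℝ} {μ : ℂ}
    (hμ : μ ∈ Metric.closedBall (d : ℂ) d) (hμ0 : μ ≠ 0) : 0 < μ.re := by
  rw [Metric.mem_closedBall, Complex.dist_eq] at hμ
  have hd : 0 ≤ d := (norm_nonneg _).trans hμ
  have hsq : Complex.normSq (μ - d) ≤ d ^ 2 := by
    rw [← Complex.sq_norm]; gcongr
  have hμpos := Complex.normSq_pos.2 hμ0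
  simp only [Complex.normSq_apply, Complex.sub_re, Complex.sub_im, Complex.ofReal_re,
    Complex.ofReal_im, sub_zero] at hsq hμpos
  nlinarith

namespace Matrix

variable {ι : Type*} [Fintype ι]

theorem rootMultiplicity_zero_charpoly_eq_finrank_ker [DecidableEq ι] {K : Type*} [Field K]
    {M : Matrix ι ι K} (hM : ∀ x, M *ᵥ (M *ᵥ x) = 0 → M *ᵥ x = 0) :
    M.charpoly.rootMultiplicity 0 = Module.finrank K (LinearMap.ker (toLin' M)) := by
  rw [Polynomial.rootMultiplicity_eq_natTrailingDegree', ← charpoly_toLin',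
    ← LinearMap.finrank_maxGenEigenspace_zero_eq,
    Module.End.maxGenEigenspace_zero_eq_ker (by simpa only [toLin'_apply] using hM)]

theorem re_map_ofReal_mulVec (M : Matrix ι ι ℝ) (z : ι → ℂ) :
    (fun i => (M.map Complex.ofReal *ᵥ z) i |>.re) = M *ᵥ fun j => (z j).re := by
  funext i
  simp [mulVec, dotProduct, Complex.re_sum]

theorem im_map_ofReal_mulVec (M : Matrix ι ι ℝ) (z : ι → ℂ) :
    (fun i => (M.map Complex.ofReal *ᵥ z) i |>.im) = M *ᵥ fun j => (z j).im := by
  funext i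
  simp [mulVec, dotProduct, Complex.im_sum]

theorem map_ofReal_mulVec_eq_zero_iff (M : Matrix ι ι ℝ) (z : ι → ℂ) :
    M.map Complex.ofReal *ᵥ z = 0 ↔
      (M *ᵥ fun j => (z j).re) = 0 ∧ (M *ᵥ fun j => (z j).im) = 0 := by
  rw [← re_map_ofReal_mulVec, ← im_map_ofReal_mulVec]
  simp only [funext_iff, Complex.ext_iff, Pi.zero_apply, Complex.zero_re, Complex.zero_im,
    forall_and]

variable [DecidableEq ι]

variable {R : Type*}

def laplacian [AddCommGroup R] (A : Matrix ι ι R) : Matrix ι ι R :=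
  of fun i j => if i = j then ∑ k ∈ univ.erase i, A i k else -A i j

section CommRing

variable [CommRing R] (A : Matrix ι ι R)

theorem laplacian_mulVec_apply (x : ι → R) (i : ι) :
    (laplacian A *ᵥ x) i = ∑ k ∈ univ.erase i, A i k * (x i - x k) := by
  simp only [mulVec, dotProduct, laplacian, of_apply, ite_mul, neg_mul,
    ← add_sum_erase univ _ (mem_univ i), if_pos, sum_mul, mul_sub, sum_sub_distrib]
  rw [sub_eq_add_neg, ← sum_neg_distrib]
  congr 1
  exact sum_congr rfl fun k hk => by rw [if_neg (ne_of_mem_erase hk).symm, mul_comm]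

theorem laplacian_mulVec_const (c : R) : laplacian A *ᵥ (fun _ => c) = 0 := by
  funext i
  simp [laplacian_mulVec_apply]

end CommRing

section Order

variable [CommRing R] [LinearOrder R] [IsStrictOrderedRing R] {A : Matrix ι ι R} {x : ι → R}
  {i r : ι}

theorem laplacian_mulVec_apply_nonneg (hA : ∀ i j, 0 ≤ A i j) (hx : ∀ k, x k ≤ x i) :
    0 ≤ (laplacian A *ᵥ x) i := by
  rw [laplacian_mulVec_apply]
  exact sum_nonneg fun k _ => mul_nonneg (hA i k) (sub_nonneg.2 (hx k))

theorem laplacian_mulVec_apply_nonpos (hA : ∀ i j, 0 ≤ A i j) (hx : ∀ k, x i ≤ x k) :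
    (laplacian A *ᵥ x) i ≤ 0 := by
  rw [laplacian_mulVec_apply]
  exact sum_nonpos fun k _ => mul_nonpos_of_nonneg_of_nonpos (hA i k) (sub_nonpos.2 (hx k))

theorem eq_of_laplacian_mulVec_apply_eq_zero (hA : ∀ i j, 0 ≤ A i j) (hx : ∀ k, x k ≤ x i)
    (hLx : (laplacian A *ᵥ x) i = 0) {k : ι} (hik : A i k ≠ 0) : x k = x i := by
  by_cases hki : k = i
  · rw [hki]
  rw [laplacian_mulVec_apply, sum_eq_zero_iff_of_nonneg
    fun k _ => mul_nonneg (hA i k) (sub_nonneg.2 (hx k))] at hLx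
  have := hLx k (mem_erase.2 ⟨hki, mem_univ k⟩)
  exact (sub_eq_zero.1 ((mul_eq_zero.1 this).resolve_left hik)).symm

theorem le_apply_root_of_laplacian_mulVec_eq_zero (hA : ∀ i j, 0 ≤ A i j)
    (hr : ∀ i, Relation.ReflTransGen (fun u v => A v u ≠ 0) r i)
    (hLx : laplacian A *ᵥ x = 0) (i : ι) : x i ≤ x r := by
  have : Nonempty ι := ⟨r⟩
  obtain ⟨j, hj⟩ := Finite.exists_max x
  suffices ∀ v, Relation.ReflTransGen (fun u v => A v u ≠ 0) r v → x v = x j → x r = x j by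
    rw [this j (hr j) rfl]; exact hj i
  intro v hv
  induction hv with
  | refl => exact id
  | tail _ hbc ih =>
    intro hc
    refine ih ((eq_of_laplacian_mulVec_apply_eq_zero hA (fun k => hc ▸ hj k) ?_ hbc).trans hc)
    rw [hLx, Pi.zero_apply]

theorem eq_apply_root_of_laplacian_mulVec_eq_zero (hA : ∀ i j, 0 ≤ A i j)
    (hr : ∀ i, Relation.ReflTransGen (fun u v => A v u ≠ 0) r i)
    (hLx : laplacian A *ᵥ x = 0) (i : ι) : x i = x r := by
  refine le_antisymm (le_apply_root_of_laplacian_mulVec_eq_zero hA hr hLx i) ?_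
  have hLnx : laplacian A *ᵥ (-x) = 0 := by rw [mulVec_neg, hLx, neg_zero]
  simpa using le_apply_root_of_laplacian_mulVec_eq_zero hA hr hLnx i

theorem laplacian_mulVec_eq_zero_of_mulVec_mulVec_eq_zero (hA : ∀ i j, 0 ≤ A i j)
    (hr : ∀ i, Relation.ReflTransGen (fun u v => A v u ≠ 0) r i)
    (hLLx : laplacian A *ᵥ (laplacian A *ᵥ x) = 0) : laplacian A *ᵥ x = 0 := by
  have hconst := eq_apply_root_of_laplacian_mulVec_eq_zero hA hr hLLx
  have : Nonempty ι := ⟨r⟩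
  obtain ⟨i, hi⟩ := Finite.exists_max x
  obtain ⟨j, hj⟩ := Finite.exists_min x
  have hpos := hconst i ▸ laplacian_mulVec_apply_nonneg hA hi
  have hneg := hconst j ▸ laplacian_mulVec_apply_nonpos hA hj
  funext k
  rw [hconst k, Pi.zero_apply]
  exact le_antisymm hneg hpos

end Order

section Complex

variable {A : Matrix ι ι ℝ} {r : ι}

theorem ker_toLin'_map_ofReal_laplacian (hA : ∀ i j, 0 ≤ A i j)
    (hr : ∀ i, Relation.ReflTransGen (fun u v => A v u ≠ 0) r i) :
    LinearMap.ker (toLin' ((laplacian A).map Complex.ofReal)) = ℂ ∙ fun _ => 1 := by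
  refine le_antisymm (fun z hz => ?_) ((Submodule.span_singleton_le_iff_mem _ _).2 ?_)
  · rw [LinearMap.mem_ker, toLin'_apply, map_ofReal_mulVec_eq_zero_iff] at hz
    refine Submodule.mem_span_singleton.2 ⟨z r, funext fun i => ?_⟩
    apply Complex.ext <;> simp [eq_apply_root_of_laplacian_mulVec_eq_zero hA hr hz.1 i,
      eq_apply_root_of_laplacian_mulVec_eq_zero hA hr hz.2 i]
  · rw [LinearMap.mem_ker, toLin'_apply, map_ofReal_mulVec_eq_zero_iff]
    exact ⟨laplacian_mulVec_const A 1, by simpa using laplacian_mulVec_const A 0⟩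

theorem rootMultiplicity_zero_charpoly_map_ofReal_laplacian (hA : ∀ i j, 0 ≤ A i j)
    (hr : ∀ i, Relation.ReflTransGen (fun u v => A v u ≠ 0) r i) :
    ((laplacian A).map Complex.ofReal).charpoly.rootMultiplicity 0 = 1 := by
  rw [rootMultiplicity_zero_charpoly_eq_finrank_ker, ker_toLin'_map_ofReal_laplacian hA hr]
  · exact finrank_span_singleton (Function.ne_iff.2 ⟨r, one_ne_zero⟩)
  intro z hz
  rw [map_ofReal_mulVec_eq_zero_iff] at hz ⊢
  rw [re_map_ofReal_mulVec, im_map_ofReal_mulVec] at hz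
  exact ⟨laplacian_mulVec_eq_zero_of_mulVec_mulVec_eq_zero hA hr hz.1,
    laplacian_mulVec_eq_zero_of_mulVec_mulVec_eq_zero hA hr hz.2⟩

theorem re_pos_of_mem_spectrum_map_ofReal_laplacian (hA : ∀ i j, 0 ≤ A i j) {μ : ℂ}
    (hμ : μ ∈ spectrum ℂ ((laplacian A).map Complex.ofReal)) (hμ0 : μ ≠ 0) : 0 < μ.re := by
  rw [← spectrum_toLin', ← Module.End.hasEigenvalue_iff_mem_spectrum] at hμ
  obtain ⟨k, hk⟩ := eigenvalue_mem_ball hμ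
  refine Complex.re_pos_of_mem_closedBall (d := ∑ j ∈ univ.erase k, A k j) ?_ hμ0
  convert hk using 2
  · simp [laplacian]
  · exact sum_congr rfl fun j hj => by
      simp [laplacian, (ne_of_mem_erase hj).symm, abs_of_nonneg (hA k j)]

end Complex

end Matrix

theorem stmt_9 {n : ℕ} (A : Matrix (Fin (n + 1)) (Fin (n + 1)) ℝ)
    (hA : ∀ i j, 0 ≤ A i j)
    -- spanning tree rooted at vertex 0: every vertex is reachable from 0 by a
    -- directed path (arc from u to v iff A v u ≠ 0, i.e. a_{vu} > 0)
    (htree : ∀ i : Fin (n + 1),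
      Relation.ReflTransGen (fun u v : Fin (n + 1) => A v u ≠ 0) 0 i)
    (L : Matrix (Fin (n + 1)) (Fin (n + 1)) ℝ)
    (hL : L = Matrix.of fun i j =>
      if i = j then ∑ k ∈ Finset.univ.erase i, A i k else -A i j) :
    ((L.map Complex.ofReal).charpoly.rootMultiplicity 0 = 1) ∧
    (∀ μ ∈ spectrum ℂ (L.map Complex.ofReal), μ ≠ 0 → 0 < μ.re) := by
  obtain rfl : L = laplacian A := hL
  exact ⟨rootMultiplicity_zero_charpoly_map_ofReal_laplacian hA htree,
    fun μ hμ hμ0 => re_pos_of_mem_spectrum_map_ofReal_laplacian hA hμ hμ0⟩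
end

section
/- Let B^c, B^d ∈ R^{n×n} (zero diagonals) be sign-inconsistent and suppose the union digraph G(B^c) ∪ G(B^d) is strongly connected. Then the matrix L_{B^{c+}+B^{d+}} + Δ_{|B^{c-}+B^{d-}|} is a nonsingular M-matrix; in particular, it is positive stable and its inverse is entrywise nonnegative. -/
/-!
`M` is a Z-matrix with off-diagonal part `-(B^{c+} + B^{d+})` whose `i`-th row sum is
`∑ⱼ |(B^{c-} + B^{d-})ᵢⱼ| ≥ 0`. Sign-inconsistency makes some row sum positive, and in a row with
zero sum both `B^c` and `B^d` are nonnegative, so every arc of the union digraph into that row is a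
nonzero entry of `M`; strong connectivity therefore joins every row, along nonzero entries of `M`,
to a row with positive sum (weak chained diagonal dominance). For such matrices a minimum principle
gives `M x ≥ 0 → x ≥ 0`, hence nonsingularity and `M⁻¹ ≥ 0`, and the Gershgorin discs
`|μ - mₖₖ| ≤ mₖₖ` through the origin leave only `μ = 0` off the open right half-plane.
-/

open Matrix BigOperators

noncomputable def entPos {n : ℕ} (B : Matrix (Fin n) (Fin n) ℝ) :
    Matrix (Fin n) (Fin n) ℝ := Matrix.of fun i j => max (B i j) 0

noncomputable def entNeg {n : ℕ} (B : Matrix (Fin n) (Fin n) ℝ) :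
    Matrix (Fin n) (Fin n) ℝ := Matrix.of fun i j => min (B i j) 0

noncomputable def rowSumDiag {n : ℕ} (A : Matrix (Fin n) (Fin n) ℝ) :
    Matrix (Fin n) (Fin n) ℝ := Matrix.diagonal fun i => ∑ j, A i j

def PosStable {n : ℕ} (A : Matrix (Fin n) (Fin n) ℝ) : Prop :=
  ∀ μ ∈ spectrum ℂ (A.map Complex.ofReal), 0 < μ.re

/-- Strong connectivity of the union digraph of `G(Bc)` and `G(Bd)`:
there is an arc from `j` to `i` iff `Bc i j ≠ 0` or `Bd i j ≠ 0`, and every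
vertex is reachable from every other vertex by a directed path. -/
def UnionStronglyConnected {n : ℕ} (Bc Bd : Matrix (Fin n) (Fin n) ℝ) : Prop :=
  ∀ u v : Fin n,
    Relation.ReflTransGen (fun j i : Fin n => Bc i j ≠ 0 ∨ Bd i j ≠ 0) u v

open Finset Relation

theorem Relation.ReflTransGen.exists_reflTransGen_of_reverse {α : Type*} {R S : α → α → Prop}
    {P : α → Prop} (hRS : ∀ a b, R a b → ¬P b → ReflTransGen S b a) {a b : α} (ha : P a)
    (hab : ReflTransGen R a b) : ∃ c, P c ∧ ReflTransGen S b c := by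
  induction hab with
  | refl => exact ⟨a, ha, .refl⟩
  | @tail b c _ hbc ih =>
    by_cases hc : P c
    · exact ⟨c, hc, .refl⟩
    · obtain ⟨d, hd, hbd⟩ := ih
      exact ⟨d, hd, (hRS b c hbc hc).trans hbd⟩

theorem Complex.re_pos_of_norm_sub_ofReal_le {μ : ℂ} {c : ℝ} (hμ : μ ≠ 0) (h : ‖μ - c‖ ≤ c) :
    0 < μ.re := by
  have hc : 0 ≤ c := (norm_nonneg _).trans h
  have hsq : ‖μ - c‖ ^ 2 ≤ c ^ 2 := pow_le_pow_left₀ (norm_nonneg _) h 2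
  rw [Complex.sq_norm, Complex.normSq_apply] at hsq
  simp only [Complex.sub_re, Complex.ofReal_re, Complex.sub_im, Complex.ofReal_im,
    sub_zero] at hsq
  have hpos : 0 < μ.re * μ.re + μ.im * μ.im := by
    simpa [Complex.normSq_apply] using Complex.normSq_pos.2 hμ
  nlinarith

section ZMatrix

variable {ι : Type*} [Fintype ι]

structure IsWeaklyChainedDiagDominantZMatrix (M : Matrix ι ι ℝ) : Prop where
  offDiag_nonpos : ∀ i j, i ≠ j → M i j ≤ 0
  rowSum_nonneg : ∀ i, 0 ≤ ∑ j, M i j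
  reaches_rowSum_pos : ∀ i, ∃ q, 0 < ∑ j, M q j ∧ ReflTransGen (fun p k => M p k ≠ 0) i q

theorem rowSum_eq_zero_and_eq_of_isMin_of_mulVec_nonneg {M : Matrix ι ι ℝ}
    (hZ : ∀ i j, i ≠ j → M i j ≤ 0) (hrow : ∀ i, 0 ≤ ∑ j, M i j) {x : ι → ℝ}
    (hx : 0 ≤ M *ᵥ x) {p : ι} (hp : ∀ k, x p ≤ x k) (hneg : x p < 0) :
    ∑ j, M p j = 0 ∧ ∀ k, M p k ≠ 0 → x k = x p := by
  have hterm : ∀ k, M p k * (x k - x p) ≤ 0 := fun k => by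
    rcases eq_or_ne p k with rfl | hk
    · simp
    · exact mul_nonpos_of_nonpos_of_nonneg (hZ p k hk) (sub_nonneg.2 (hp k))
  have hsplit : (M *ᵥ x) p = ∑ k, M p k * (x k - x p) + (∑ k, M p k) * x p := by
    simp only [mulVec, dotProduct, mul_sub, sum_sub_distrib, sum_mul]
    ring
  have hMx : 0 ≤ (M *ᵥ x) p := hx p
  have hsum : ∑ k, M p k * (x k - x p) ≤ 0 := sum_nonpos fun k _ => hterm k
  have hdiag : (∑ k, M p k) * x p ≤ 0 := mul_nonpos_of_nonneg_of_nonpos (hrow p) hneg.le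
  have hsum0 : ∑ k, M p k * (x k - x p) = 0 := by linarith
  have hdiag0 : (∑ k, M p k) * x p = 0 := by linarith
  refine ⟨(mul_eq_zero.1 hdiag0).resolve_right hneg.ne, fun k hk => ?_⟩
  have hk0 := (sum_eq_zero_iff_of_nonpos fun k _ => hterm k).1 hsum0 k (mem_univ k)
  exact sub_eq_zero.1 ((mul_eq_zero.1 hk0).resolve_left hk)

namespace IsWeaklyChainedDiagDominantZMatrix

variable {M : Matrix ι ι ℝ}

theorem nonneg_of_mulVec_nonneg (hM : IsWeaklyChainedDiagDominantZMatrix M) {x : ι → ℝ}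
    (hx : 0 ≤ M *ᵥ x) : 0 ≤ x := by
  intro i
  by_contra! hi
  obtain ⟨p, -, hp⟩ := exists_min_image univ x ⟨i, mem_univ i⟩
  have hpneg : x p < 0 := (hp i (mem_univ i)).trans_lt hi
  have hmin {b : ι} (hb : x b = x p) :=
    rowSum_eq_zero_and_eq_of_isMin_of_mulVec_nonneg hM.offDiag_nonpos hM.rowSum_nonneg hx
      (fun k => hb ▸ hp k (mem_univ k)) (hb ▸ hpneg)
  obtain ⟨q, hq, hpq⟩ := hM.reaches_rowSum_pos p
  -- the set of minimisers of `x` is closed along the nonzero entries of `M`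
  have hxq : x q = x p := by
    clear hq
    induction hpq with
    | refl => rfl
    | @tail b c _ hbc ih =>
      exact ((hmin ih).2 c hbc).trans ih
  exact hq.ne' (hmin hxq).1

variable [DecidableEq ι]

theorem det_ne_zero (hM : IsWeaklyChainedDiagDominantZMatrix M) : M.det ≠ 0 := by
  intro h
  obtain ⟨v, hv0, hv⟩ := exists_mulVec_eq_zero_iff.2 h
  have hpos : 0 ≤ v := hM.nonneg_of_mulVec_nonneg hv.ge
  have hneg : 0 ≤ -v := hM.nonneg_of_mulVec_nonneg (by rw [mulVec_neg, hv, neg_zero])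
  exact hv0 (le_antisymm (neg_nonneg.1 hneg) hpos)

theorem inv_nonneg (hM : IsWeaklyChainedDiagDominantZMatrix M) (i j : ι) : 0 ≤ M⁻¹ i j := by
  have hcol : M *ᵥ (M⁻¹ *ᵥ Pi.single j 1) = Pi.single j 1 := by
    rw [mulVec_mulVec, mul_nonsing_inv _ (isUnit_iff_ne_zero.2 hM.det_ne_zero), one_mulVec]
  have := hM.nonneg_of_mulVec_nonneg (hcol ▸ Pi.single_nonneg.2 zero_le_one) i
  rwa [mulVec_single_one] at this

end IsWeaklyChainedDiagDominantZMatrix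

end ZMatrix

theorem posStable_of_det_ne_zero {n : ℕ} {M : Matrix (Fin n) (Fin n) ℝ}
    (hZ : ∀ i j, i ≠ j → M i j ≤ 0) (hrow : ∀ i, 0 ≤ ∑ j, M i j) (hdet : M.det ≠ 0) :
    PosStable M := by
  intro μ hμ
  have hμ0 : μ ≠ 0 := by
    rintro rfl
    rw [spectrum.zero_mem_iff, isUnit_iff_isUnit_det, isUnit_iff_ne_zero, not_not] at hμ
    have hdet' := RingHom.map_det Complex.ofRealHom M
    rw [RingHom.mapMatrix_apply] at hdet'
    exact hdet (Complex.ofReal_eq_zero.1 (hdet'.trans hμ))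
  obtain ⟨k, hk⟩ := eigenvalue_mem_ball (A := M.map Complex.ofReal)
    (Module.End.hasEigenvalue_iff_mem_spectrum.2 (by rwa [Matrix.spectrum_toLin']))
  rw [mem_closedBall_iff_norm] at hk
  have hradius : ∑ j ∈ univ.erase k, ‖(M.map Complex.ofReal) k j‖ ≤ M k k := by
    have hk0 := hrow k
    rw [← add_sum_erase _ _ (mem_univ k)] at hk0
    calc _ = ∑ j ∈ univ.erase k, -M k j := sum_congr rfl fun j hj => by
            rw [Matrix.map_apply, Complex.norm_real, Real.norm_eq_abs,
              abs_of_nonpos (hZ k j (ne_of_mem_erase hj).symm)]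
      _ ≤ M k k := by rw [sum_neg_distrib]; linarith
  exact Complex.re_pos_of_norm_sub_ofReal_le hμ0 (hk.trans hradius)

section Laplacian

variable {n : ℕ}

theorem signedLaplacian_add_rowSumDiag_apply_of_ne (A C : Matrix (Fin n) (Fin n) ℝ)
    {i j : Fin n} (h : i ≠ j) : (signedLaplacian A + rowSumDiag C) i j = -A i j := by
  simp [signedLaplacian, rowSumDiag, h]

theorem sum_signedLaplacian_add_rowSumDiag_row {A : Matrix (Fin n) (Fin n) ℝ}
    (hA : ∀ i j, 0 ≤ A i j) (C : Matrix (Fin n) (Fin n) ℝ) (i : Fin n) :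
    ∑ j, (signedLaplacian A + rowSumDiag C) i j = ∑ j, C i j := by
  rw [← add_sum_erase _ _ (mem_univ i), ← sum_congr rfl fun j hj =>
    (signedLaplacian_add_rowSumDiag_apply_of_ne A C (ne_of_mem_erase hj).symm).symm]
  simp only [signedLaplacian, mem_univ, sum_erase_eq_sub, rowSumDiag, Matrix.add_apply, of_apply,
    ↓reduceIte, abs_of_nonneg (hA i _), diagonal_apply_eq, sum_neg_distrib, neg_sub]
  ring

theorem entPos_nonneg (B : Matrix (Fin n) (Fin n) ℝ) (i j : Fin n) : 0 ≤ entPos B i j :=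
  le_max_right _ _

theorem entNeg_add_entNeg_ne_zero {Bc Bd : Matrix (Fin n) (Fin n) ℝ} {i j : Fin n}
    (h : Bc i j * Bd i j < 0) : entNeg Bc i j + entNeg Bd i j ≠ 0 := by
  simp only [entNeg, of_apply]
  rcases mul_neg_iff.1 h with ⟨hc, hd⟩ | ⟨hc, hd⟩
  · rw [min_eq_right hc.le, min_eq_left hd.le]; linarith
  · rw [min_eq_left hc.le, min_eq_right hd.le]; linarith

theorem entPos_add_entPos_pos {Bc Bd : Matrix (Fin n) (Fin n) ℝ} {i j : Fin n}
    (hneg : entNeg Bc i j + entNeg Bd i j = 0) (hne : Bc i j ≠ 0 ∨ Bd i j ≠ 0) :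
    0 < entPos Bc i j + entPos Bd i j := by
  simp only [entNeg, entPos, of_apply] at hneg ⊢
  have hc := min_le_right (Bc i j) 0
  have hd := min_le_right (Bd i j) 0
  have hc0 : 0 ≤ Bc i j := min_eq_right_iff.1 (by linarith)
  have hd0 : 0 ≤ Bd i j := min_eq_right_iff.1 (by linarith)
  rw [max_eq_left hc0, max_eq_left hd0]
  rcases hne with h | h
  · exact add_pos_of_pos_of_nonneg (hc0.lt_of_ne' h) hd0
  · exact add_pos_of_nonneg_of_pos hc0 (hd0.lt_of_ne' h)

end Laplacian

theorem stmt_10_general {n : ℕ} (Bc Bd : Matrix (Fin n) (Fin n) ℝ)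
    (hsi : ∃ i j, Bc i j * Bd i j < 0)
    (hconn : UnionStronglyConnected Bc Bd)
    (M : Matrix (Fin n) (Fin n) ℝ)
    (hM : M = signedLaplacian (entPos Bc + entPos Bd)
      + rowSumDiag (Matrix.of fun i j => |(entNeg Bc + entNeg Bd) i j|)) :
    (∀ i j, i ≠ j → M i j ≤ 0) ∧ PosStable M ∧ IsUnit M.det ∧ ∀ i j, 0 ≤ M⁻¹ i j := by
  have hA i j : 0 ≤ entPos Bc i j + entPos Bd i j :=
    add_nonneg (entPos_nonneg Bc i j) (entPos_nonneg Bd i j)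
  have hoff {i j} (h : i ≠ j) : M i j = -(entPos Bc i j + entPos Bd i j) :=
    hM ▸ signedLaplacian_add_rowSumDiag_apply_of_ne _ _ h
  have hrow i : ∑ j, M i j = ∑ j, |entNeg Bc i j + entNeg Bd i j| :=
    hM ▸ sum_signedLaplacian_add_rowSumDiag_row hA _ i
  have hZ i j (h : i ≠ j) : M i j ≤ 0 := by linarith [hoff h, hA i j]
  have hrow_nonneg i : 0 ≤ ∑ j, M i j := hrow i ▸ sum_nonneg fun j _ => abs_nonneg _
  -- in a row with zero sum, `Bc` and `Bd` are nonnegative, so arcs of the union digraph survive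
  have harc j i (hji : Bc i j ≠ 0 ∨ Bd i j ≠ 0) (hi : ¬0 < ∑ k, M i k) :
      ReflTransGen (fun p k => M p k ≠ 0) i j := by
    rcases eq_or_ne i j with rfl | hij
    · exact .refl
    have hzero : ∑ k, |entNeg Bc i k + entNeg Bd i k| = 0 := by
      linarith [hrow i, hrow_nonneg i]
    have hij0 := (sum_eq_zero_iff_of_nonneg fun k _ => abs_nonneg _).1 hzero j (mem_univ j)
    rw [abs_eq_zero] at hij0
    exact .single (by rw [hoff hij, neg_ne_zero]; exact (entPos_add_entPos_pos hij0 hji).ne')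
  obtain ⟨i₀, j₀, hsi₀⟩ := hsi
  have hpos : 0 < ∑ j, M i₀ j := hrow i₀ ▸ sum_pos' (fun j _ => abs_nonneg _)
    ⟨j₀, mem_univ j₀, abs_pos.2 (entNeg_add_entNeg_ne_zero hsi₀)⟩
  have hW : IsWeaklyChainedDiagDominantZMatrix M :=
    ⟨hZ, hrow_nonneg, fun i => (hconn i₀ i).exists_reflTransGen_of_reverse harc hpos⟩
  exact ⟨hZ, posStable_of_det_ne_zero hZ hrow_nonneg hW.det_ne_zero,
    isUnit_iff_ne_zero.2 hW.det_ne_zero, hW.inv_nonneg⟩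

theorem stmt_10 {n : ℕ} (Bc Bd : Matrix (Fin n) (Fin n) ℝ)
    (hBc : ∀ i, Bc i i = 0) (hBd : ∀ i, Bd i i = 0)
    (hsi : ∃ i j, Bc i j * Bd i j < 0)
    (hconn : UnionStronglyConnected Bc Bd)
    (M : Matrix (Fin n) (Fin n) ℝ)
    (hM : M = signedLaplacian (entPos Bc + entPos Bd)
      + rowSumDiag (Matrix.of fun i j => |(entNeg Bc + entNeg Bd) i j|)) :
    (∀ i j, i ≠ j → M i j ≤ 0) ∧ PosStable M ∧ IsUnit M.det ∧ ∀ i j, 0 ≤ M⁻¹ i j :=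
  stmt_10_general Bc Bd hsi hconn M hM
end

section
/- Let L ∈ R^{n×n} be a matrix with zero row sums (L·1_n = 0) whose eigenvalue 0 is simple and all other eigenvalues have positive real part. With E = [-1_{n-1} I] ∈ R^{(n-1)×n} and F = [0; I] ∈ R^{n×(n-1)}, the reduced matrix E·L·F ∈ R^{(n-1)×(n-1)} is positive stable. -/
/-!
Let `S = 1 - N` and `T = 1 + N`, where `N` has ones in column `0` below the diagonal and zeros
elsewhere. Since `N² = 0`, `T = S⁻¹`. Rows `1, …, n` of `S` form `E`, columns `1, …, n` of `T`
form `F`, and column `0` of `T` is `𝟙`. Hence `S L T` has first column `S L 𝟙 = 0` and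
lower-right block `E L F`, so `χ_L = X · χ_{ELF}`. Because `0` is a simple root of `χ_L`,
it is not an eigenvalue of `ELF`. Every eigenvalue of `ELF` is then a nonzero eigenvalue of `L`,
so it has positive real part.
-/

open Matrix BigOperators

open Polynomial Function

namespace Matrix

variable {R : Type*} [CommRing R]

theorem charmatrix_submatrix {m p : Type*} [Fintype m] [DecidableEq m] [Fintype p]
    [DecidableEq p] (M : Matrix p p R) {e : m → p} (he : Injective e) :
    charmatrix (M.submatrix e e) = (charmatrix M).submatrix e e := by
  ext i j : 1
  by_cases h : i = j
  · subst h
    simp [charmatrix_apply_eq]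
  · simp [charmatrix_apply_ne _ _ _ h, charmatrix_apply_ne _ _ _ (he.ne h)]

theorem charpoly_mul_mul_of_mul_eq_one {m : Type*} [Fintype m] [DecidableEq m]
    {S T : Matrix m m R} (h : S * T = 1) (M : Matrix m m R) :
    (S * M * T).charpoly = M.charpoly := by
  rw [Matrix.mul_assoc, charpoly_mul_comm, Matrix.mul_assoc, mul_eq_one_comm.mp h,
    Matrix.mul_one]

variable {n : ℕ}

theorem charpoly_eq_X_mul_charpoly_submatrix_succ (M : Matrix (Fin (n + 1)) (Fin (n + 1)) R)
    (h : ∀ i, M i 0 = 0) : M.charpoly = X * (M.submatrix Fin.succ Fin.succ).charpoly := by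
  simp [charpoly, det_succ_column_zero, Fin.sum_univ_succ, h,
    charmatrix_submatrix M (Fin.succ_injective n)]

/-- `1 + c • N` in the notation of the header, so `S = firstColShear n (-1)` and
`T = firstColShear n 1`. -/
def firstColShear (n : ℕ) (c : R) : Matrix (Fin (n + 1)) (Fin (n + 1)) R :=
  of fun i j => if i = j then 1 else if j = 0 then c else 0

theorem firstColShear_zero : firstColShear n (0 : R) = 1 := by
  ext i j
  simp [firstColShear, one_apply]

theorem firstColShear_mul_firstColShear (a b : R) :
    firstColShear n a * firstColShear n b = firstColShear n (a + b) := by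
  ext i j
  induction i using Fin.cases <;> induction j using Fin.cases <;>
    simp [firstColShear, mul_apply, Fin.sum_univ_succ, Fin.succ_ne_zero, eq_comm]

theorem mul_firstColShear_one_apply_zero (A : Matrix (Fin (n + 1)) (Fin (n + 1)) R)
    (i : Fin (n + 1)) : (A * firstColShear n (1 : R)) i 0 = (A *ᵥ fun _ => 1) i := by
  simp [firstColShear, mul_apply, mulVec, dotProduct]

def diffFromFirst (n : ℕ) : Matrix (Fin n) (Fin (n + 1)) R :=
  of fun i j => if j = 0 then -1 else if j = i.succ then 1 else 0

def tailEmbedding (n : ℕ) : Matrix (Fin (n + 1)) (Fin n) R :=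
  of fun i j => if i = j.succ then 1 else 0

theorem submatrix_firstColShear_neg_one :
    (firstColShear n (-1 : R)).submatrix Fin.succ id = diffFromFirst n := by
  ext i j
  induction j using Fin.cases <;> simp [firstColShear, diffFromFirst, eq_comm]

theorem submatrix_firstColShear_one :
    (firstColShear n (1 : R)).submatrix id Fin.succ = tailEmbedding n := by
  ext i j
  simp [firstColShear, tailEmbedding]

theorem charpoly_eq_X_mul_charpoly_of_mulVec_one_eq_zero
    (M : Matrix (Fin (n + 1)) (Fin (n + 1)) R) (hM : M *ᵥ (fun _ => 1) = 0) :
    M.charpoly = X * ((diffFromFirst n : Matrix _ _ R) * M * tailEmbedding n).charpoly := by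
  have hinv : firstColShear n (-1 : R) * firstColShear n 1 = 1 := by
    rw [firstColShear_mul_firstColShear, neg_add_cancel, firstColShear_zero]
  have hcol : ∀ i, (firstColShear n (-1 : R) * M * firstColShear n (1 : R)) i 0 = 0 :=
    fun i => by
      rw [mul_firstColShear_one_apply_zero, ← mulVec_mulVec, hM, mulVec_zero, Pi.zero_apply]
  rw [← charpoly_mul_mul_of_mul_eq_one hinv M, charpoly_eq_X_mul_charpoly_submatrix_succ _ hcol,
    submatrix_mul _ _ _ id _ bijective_id, submatrix_mul _ _ _ id _ bijective_id,
    submatrix_id_id, submatrix_firstColShear_neg_one, submatrix_firstColShear_one]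
  rfl

end Matrix

theorem Polynomial.not_isRoot_of_rootMultiplicity_X_sub_C_mul_eq_one {R : Type*} [CommRing R]
    {p : R[X]} {a : R} (hp : p ≠ 0) (h : ((X - C a) * p).rootMultiplicity a = 1) :
    ¬ p.IsRoot a := by
  rw [mul_comm, ← pow_one (X - C a), rootMultiplicity_mul_X_sub_C_pow hp] at h
  rw [← rootMultiplicity_pos hp]
  omega

theorem stmt_14 {n : ℕ} (L : Matrix (Fin (n + 1)) (Fin (n + 1)) ℝ)
    (hrow : L *ᵥ (fun _ => (1 : ℝ)) = 0)
    (hsimple : (L.map Complex.ofReal).charpoly.rootMultiplicity 0 = 1)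
    (hspec : ∀ μ ∈ spectrum ℂ (L.map Complex.ofReal), μ ≠ 0 → 0 < μ.re)
    (E : Matrix (Fin n) (Fin (n + 1)) ℝ)
    (hE : E = Matrix.of fun i j => if j = 0 then -1 else if j = i.succ then 1 else 0)
    (F : Matrix (Fin (n + 1)) (Fin n) ℝ)
    (hF : F = Matrix.of fun i j => if i = j.succ then 1 else 0) :
    PosStable (E * L * F) := by
  have hmap : ∀ {m : ℕ} (A : Matrix (Fin m) (Fin m) ℝ),
      (A.map Complex.ofReal).charpoly = A.charpoly.map Complex.ofRealHom :=
    fun A => charpoly_map A Complex.ofRealHom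
  have hfactor : (L.map Complex.ofReal).charpoly =
      (X - C 0) * ((E * L * F).map Complex.ofReal).charpoly := by
    rw [C_0, sub_zero, hmap, hmap, hE, hF, charpoly_eq_X_mul_charpoly_of_mulVec_one_eq_zero L hrow,
      Polynomial.map_mul, map_X]
    rfl
  intro μ hμ
  rw [mem_spectrum_iff_isRoot_charpoly] at hμ
  have hμ0 : μ ≠ 0 := by
    rintro rfl
    rw [hfactor] at hsimple
    exact not_isRoot_of_rootMultiplicity_X_sub_C_mul_eq_one (charpoly_monic _).ne_zero hsimple hμ
  refine hspec μ ?_ hμ0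
  rw [mem_spectrum_iff_isRoot_charpoly, hfactor]
  exact hμ.dvd (dvd_mul_left _ _)
end

section
/- Let W ∈ R^{m×m} be symmetric positive definite, Ψ ∈ R^{m×m}, δ > 1, and k > λ_max(W)·λ_max(ΨΨᵀ)/(2(δ-1)). Then the symmetric block matrix [[I, k^{-1}ΨᵀW],[k^{-1}WΨ, 2k^{-1}(δ-1)W]] is positive definite. -/
open Matrix

/-- The largest element of the real spectrum of a matrix. -/
noncomputable def maxEig {m : ℕ} (A : Matrix (Fin m) (Fin m) ℝ) : ℝ :=
  sSup (spectrum ℝ A)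

/-!
Taking the Schur complement of the identity block, the matrix is positive definite iff
`S = 2k⁻¹(δ-1) W - k⁻² W ΨΨᵀ W` is. In the Loewner order `ΨΨᵀ ≤ λ_max(ΨΨᵀ) I` and
`W² ≤ λ_max(W) W`, so `W ΨΨᵀ W ≤ λ_max(ΨΨᵀ) λ_max(W) W` and `S ≥ c W` with
`c = k⁻² (2k(δ-1) - λ_max(W) λ_max(ΨΨᵀ))`, which is positive exactly by the bound on `k`.
-/

open scoped MatrixOrder ComplexOrder

namespace Matrix

variable {𝕜 : Type*} [RCLike 𝕜] {m n : Type*}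

theorem PosDef.posDef_fromBlocks₁₁_iff [Fintype m] [Fintype n] [DecidableEq m] [DecidableEq n]
    {A : Matrix m m 𝕜} (B : Matrix m n 𝕜) (D : Matrix n n 𝕜) (hA : A.PosDef) :
    (fromBlocks A B Bᴴ D).PosDef ↔ (D - Bᴴ * A⁻¹ * B).PosDef := by
  have := hA.isUnit.invertible
  have hdet : (fromBlocks A B Bᴴ D).det = A.det * (D - Bᴴ * A⁻¹ * B).det := by
    rw [det_fromBlocks₁₁, invOf_eq_nonsing_inv]
  constructor
  · intro h
    have hS := (PosDef.fromBlocks₁₁ B D hA).1 h.posSemidef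
    rw [hS.posDef_iff_det_ne_zero]
    exact right_ne_zero_of_mul (hdet ▸ h.det_pos.ne')
  · intro h
    have hM := (PosDef.fromBlocks₁₁ B D hA).2 h.posSemidef
    rw [hM.posDef_iff_det_ne_zero, hdet]
    exact mul_ne_zero hA.det_pos.ne' h.det_pos.ne'

theorem PosDef.of_le {A B : Matrix n n 𝕜} (hA : A.PosDef) (hAB : A ≤ B) : B.PosDef := by
  simpa using hA.add_posSemidef hAB

end Matrix

section maxEig

variable {m : ℕ} {A : Matrix (Fin m) (Fin m) ℝ}

theorem le_maxEig {x : ℝ} (hx : x ∈ spectrum ℝ A) : x ≤ maxEig A :=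
  le_csSup A.finite_real_spectrum.bddAbove hx

theorem maxEig_nonneg (hA : A.PosSemidef) : 0 ≤ maxEig A :=
  Real.sSup_nonneg fun _ hx => spectrum_nonneg_of_nonneg hA.nonneg hx

theorem Matrix.IsHermitian.le_maxEig_smul_one (hA : A.IsHermitian) : A ≤ maxEig A • 1 := by
  rw [← Algebra.algebraMap_eq_smul_one]
  exact le_algebraMap_of_spectrum_le (fun _ hx => le_maxEig hx) hA.isSelfAdjoint

theorem Matrix.PosSemidef.mul_self_le_maxEig_smul (hA : A.PosSemidef) : A * A ≤ maxEig A • A := by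
  have := cfc_mono (a := A) (f := fun x => x * x) (g := fun x => maxEig A * x)
    fun x hx => mul_le_mul_of_nonneg_right (le_maxEig hx) (spectrum_nonneg_of_nonneg hA.nonneg hx)
  rwa [cfc_mul (fun x => x) (fun x => x) A, cfc_const_mul (maxEig A) (fun x => x) A, cfc_id' ℝ A]
    at this

end maxEig

theorem stmt_17 {m : ℕ} (W : Matrix (Fin m) (Fin m) ℝ) (hW : W.PosDef)
    (Ψ : Matrix (Fin m) (Fin m) ℝ) (δ k : ℝ) (hδ : 1 < δ)
    (hk : maxEig W * maxEig (Ψ * Ψᵀ) / (2 * (δ - 1)) < k) :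
    (Matrix.fromBlocks 1 (k⁻¹ • (Ψᵀ * W)) (k⁻¹ • (W * Ψ))
      ((2 * k⁻¹ * (δ - 1)) • W)).PosDef := by
  have hΨ : (Ψ * Ψᵀ).PosSemidef := by simpa using posSemidef_self_mul_conjTranspose Ψ
  have hWT : Wᵀ = W := hW.1
  have hkey : maxEig W * maxEig (Ψ * Ψᵀ) < 2 * (δ - 1) * k := by
    rwa [div_lt_iff₀' (by linarith)] at hk
  have hk0 : 0 < k := (div_nonneg (mul_nonneg (maxEig_nonneg hW.posSemidef) (maxEig_nonneg hΨ))
    (by linarith)).trans_lt hk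
  have hB : (k⁻¹ • (Ψᵀ * W))ᴴ = k⁻¹ • (W * Ψ) := by simp [hWT]
  rw [← hB, PosDef.posDef_fromBlocks₁₁_iff _ _ PosDef.one, inv_one, Matrix.mul_one, hB]
  set c := 2 * k⁻¹ * (δ - 1) - k⁻¹ ^ 2 * (maxEig (Ψ * Ψᵀ) * maxEig W)
  have hc : 0 < c := by
    have hc_eq : c = k⁻¹ ^ 2 * (2 * (δ - 1) * k - maxEig W * maxEig (Ψ * Ψᵀ)) := by
      simp only [c]; field_simp
    rw [hc_eq]; exact mul_pos (by positivity) (by linarith)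
  have hconj : W * (Ψ * Ψᵀ) * W ≤ (maxEig (Ψ * Ψᵀ) * maxEig W) • W := calc
    W * (Ψ * Ψᵀ) * W ≤ W * (maxEig (Ψ * Ψᵀ) • 1) * W :=
      IsSelfAdjoint.conjugate_le_conjugate hΨ.1.le_maxEig_smul_one hW.1.isSelfAdjoint
    _ = maxEig (Ψ * Ψᵀ) • (W * W) := by simp
    _ ≤ maxEig (Ψ * Ψᵀ) • (maxEig W • W) :=
      smul_le_smul_of_nonneg_left hW.posSemidef.mul_self_le_maxEig_smul (maxEig_nonneg hΨ)
    _ = _ := smul_smul ..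
  refine (hW.smul hc).of_le ?_
  calc c • W = (2 * k⁻¹ * (δ - 1)) • W - k⁻¹ ^ 2 • ((maxEig (Ψ * Ψᵀ) * maxEig W) • W) := by
        rw [sub_smul, smul_smul]
    _ ≤ (2 * k⁻¹ * (δ - 1)) • W - k⁻¹ ^ 2 • (W * (Ψ * Ψᵀ) * W) := by gcongr
    _ = (2 * k⁻¹ * (δ - 1)) • W - k⁻¹ • (W * Ψ) * k⁻¹ • (Ψᵀ * W) := by
        simp [smul_smul, Matrix.mul_assoc, sq]
end
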